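/- For all integers n ≥ 1, r ≥ 1 and 0 ≤ d ≤ n, the number of r-Schröder paths of size n having exactly n−d diagonal steps is S_{n,d}^r = (1/(dr+1))·C(n,d)·C(dr+n, n), i.e. (dr+1)·|Sch_{n,d}^r| = C(n,d)·C(dr+n, n). -/

import Mathlib

/-!
Weight a down step by `r`, a right step by `-1` and a diagonal step by `0`. Appending a right step
to a path in `Sch r n d` gives a word of length `M = n + r d + 1` with `d` down and `n - d`
diagonal steps, hence of total weight `-1`, whose proper prefixes all have nonnegative weight; every
such word arises exactly once in this way. By Raney's cycle lemma every word with these step counts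
has exactly one cyclic shift with nonnegative proper prefixes, so
`M * |Sch r n d| = C(M, d) * C(M - d, n - d)`, which rearranges to the formula.
-/

/-- Steps of an `r`-Schröder path: down `(0,-1)`, right `(1,0)`, diagonal `(r,-1)`. -/
inductive SStep : Type
  | down | right | diag
deriving DecidableEq

/-- Displacement of a step for slope parameter `r`. -/
def sDisp (r : ℤ) : SStep → ℤ × ℤ
  | .down => (0, -1)
  | .right => (1, 0)
  | .diag => (r, -1)

/-- Position reached after performing the steps `l`, starting at `(0, n)`. -/
def sPos (r n : ℤ) (l : List SStep) : ℤ × ℤ :=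
  l.foldl (fun p s => p + sDisp r s) (0, n)

/-- `α` is an `r`-Schröder path of size `n`: it goes from `(0,n)` to `(r*n, 0)` and never
passes strictly above the line segment joining `(0,n)` and `(r*n,0)`
(the segment lies on the line `x + r*y = r*n`). -/
def IsSchroder (r n : ℕ) (α : List SStep) : Prop :=
  sPos r n α = ((r : ℤ) * n, 0) ∧
  ∀ β, β <+: α → (sPos r n β).1 + (r : ℤ) * (sPos r n β).2 ≤ (r : ℤ) * n

/-- `Sch r n d` : the set of `r`-Schröder paths of size `n` with exactly `n - d`
diagonal steps. -/
def Sch (r n d : ℕ) : Set (List SStep) :=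
  {α | IsSchroder r n α ∧ α.count SStep.diag = n - d}

open Finset Function Fin.NatCast

lemma List.count_ofFn {α : Type*} [DecidableEq α] {M : ℕ} (f : Fin M → α) (a : α) :
    (List.ofFn f).count a = #{i | f i = a} := by
  rw [← Multiset.coe_count, ← Fin.univ_val_map, Multiset.count_map, card_def, filter_val]
  simp only [eq_comm]

lemma List.sum_take_map_ofFn {α β : Type*} [AddCommMonoid β] {M : ℕ} [NeZero M] (v : α → β)
    (f : Fin M → α) {t : ℕ} (ht : t ≤ M) :
    (((List.ofFn f).take t).map v).sum = ∑ i ∈ Finset.range t, v (f i) := by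
  rw [List.map_take, List.map_ofFn, List.sum_take_ofFn]
  refine sum_nbij' (fun j => j.val) (fun i => (i : Fin M)) ?_ ?_ ?_ ?_ ?_
  · intro i hi
    simpa using hi
  · intro i hi
    simp_all [Fin.val_cast_of_lt ((mem_range.1 hi).trans_le ht)]
  · simp
  · intro i hi
    exact Fin.val_cast_of_lt ((mem_range.1 hi).trans_le ht)
  · simp

lemma succ_mul_choose_mul_choose (m n d : ℕ) (hd : d ≤ n) :
    (m + 1) * ((m + n + 1).choose d * (m + n + 1 - d).choose (n - d)) =
      (m + n + 1) * (n.choose d * (m + n).choose n) := by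
  have h := Nat.choose_mul_succ_eq (m + n) n
  rw [show m + n + 1 - n = m + 1 by omega] at h
  rw [← Nat.choose_mul hd, mul_comm (m + n + 1), mul_assoc, h]
  ring

section CycleLemma

variable {g : ℕ → ℤ} {M : ℕ}

lemma Function.Periodic.sum_range_add (hg : Periodic g M) (j : ℕ) :
    ∑ i ∈ range (M + j), g i = ∑ i ∈ range M, g i + ∑ i ∈ range j, g i := by
  rw [Finset.sum_range_add]
  congr 1
  exact sum_congr rfl fun i _ => by rw [add_comm, hg]

/-- Raney's cycle lemma. The shift that works starts at the first index in `[0, M)` where the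
partial sums of `g` attain their minimum. -/
theorem existsUnique_shift_partialSums_nonneg (hM : 0 < M) (hg : Periodic g M)
    (hsum : ∑ i ∈ range M, g i = -1) :
    ∃! k, k < M ∧ ∀ t < M, 0 ≤ ∑ i ∈ range t, g (k + i) := by
  set P : ℕ → ℤ := fun j => ∑ i ∈ range j, g i with hP
  have shift (k t : ℕ) : ∑ i ∈ range t, g (k + i) = P (k + t) - P k := by
    simp only [hP, Finset.sum_range_add]; ring
  have wrap (j : ℕ) : P (M + j) = P j - 1 := by
    simp only [hP, hg.sum_range_add, hsum]; ring
  simp only [shift, sub_nonneg]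
  have no_two_good (a b : ℕ) (hab : a < b) (hbM : b < M) (ha : ∀ t < M, P a ≤ P (a + t))
      (hb : ∀ t < M, P b ≤ P (b + t)) : False := by
    have h1 := ha (b - a) (by omega)
    have h2 := hb (M + a - b) (by omega)
    rw [show a + (b - a) = b by omega] at h1
    rw [show b + (M + a - b) = M + a by omega, wrap] at h2
    linarith
  have hmin : ∃ k, k < M ∧ ∀ i < M, P k ≤ P i := by
    obtain ⟨k, hk, hkmin⟩ := exists_min_image (range M) P ⟨0, mem_range.2 hM⟩
    exact ⟨k, mem_range.1 hk, fun i hi => hkmin i (mem_range.2 hi)⟩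
  obtain ⟨hk₀M, hk₀min⟩ := Nat.find_spec hmin
  have hk₀good : ∀ t < M, P (Nat.find hmin) ≤ P (Nat.find hmin + t) := by
    intro t ht
    by_cases hkt : Nat.find hmin + t < M
    · exact hk₀min _ hkt
    · obtain ⟨j, hj⟩ : ∃ j, Nat.find hmin + t = M + j :=
        ⟨_, (Nat.add_sub_of_le (not_lt.1 hkt)).symm⟩
      have hjk : j < Nat.find hmin := by omega
      obtain ⟨i, hi, hij⟩ : ∃ i < M, P i < P j := by
        simpa [hjk.trans hk₀M] using Nat.find_min hmin hjk
      rw [hj, wrap]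
      linarith [hk₀min i hi]
  refine ⟨Nat.find hmin, ⟨hk₀M, hk₀good⟩, fun k ⟨hkM, hk⟩ => ?_⟩
  rcases lt_trichotomy k (Nat.find hmin) with h | h | h
  · exact (no_two_good _ _ h hk₀M hk hk₀good).elim
  · exact h
  · exact (no_two_good _ _ h hkM hk₀good hk).elim

end CycleLemma

section Words

variable {α : Type*} {M : ℕ} [NeZero M] (v : α → ℤ)

def PrefixSumsNonneg (f : Fin M → α) : Prop :=
  ∀ t < M, 0 ≤ ∑ i ∈ range t, v (f i)

instance : DecidablePred (PrefixSumsNonneg (M := M) v) :=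
  fun _ => Nat.decidableBallLT _ _

variable {v}

lemma card_prefixSumsNonneg_shifts_eq_one {f : Fin M → α}
    (hf : ∑ i ∈ range M, v (f i) = -1) :
    #{k | PrefixSumsNonneg v fun i => f (k + i)} = 1 := by
  have hper : Periodic (fun i : ℕ => v (f i)) M := fun i => by simp
  obtain ⟨k, ⟨hkM, hk⟩, huniq⟩ :=
    existsUnique_shift_partialSums_nonneg (NeZero.pos M) hper hf
  have shift (k : Fin M) : (PrefixSumsNonneg v fun i => f (k + i)) ↔
      ∀ t < M, 0 ≤ ∑ i ∈ range t, v (f ↑(k.val + i)) := by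
    simp only [PrefixSumsNonneg, Nat.cast_add, Fin.cast_val_eq_self]
  rw [card_eq_one]
  refine ⟨⟨k, hkM⟩, eq_singleton_iff_unique_mem.2
    ⟨mem_filter.2 ⟨mem_univ _, (shift _).2 hk⟩, fun k' hk' => ?_⟩⟩
  rw [mem_filter, shift] at hk'
  exact Fin.ext (huniq k' ⟨k'.isLt, hk'.2⟩)

lemma card_eq_mul_card_filter_prefixSumsNonneg (S : Finset (Fin M → α))
    (hS : ∀ f ∈ S, ∀ k, (fun i => f (k + i)) ∈ S)
    (hsum : ∀ f ∈ S, ∑ i ∈ range M, v (f i) = -1) :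
    #S = M * #{f ∈ S | PrefixSumsNonneg v f} := by
  calc #S = ∑ f ∈ S, #{k | PrefixSumsNonneg v fun i => f (k + i)} := by
        rw [card_eq_sum_ones]
        exact sum_congr rfl fun f hf => (card_prefixSumsNonneg_shifts_eq_one (hsum f hf)).symm
    _ = ∑ k : Fin M, #{f ∈ S | PrefixSumsNonneg v fun i => f (k + i)} := by
        have h := sum_card_bipartiteAbove_eq_sum_card_bipartiteBelow (s := S) (t := univ)
          (r := fun f (k : Fin M) => PrefixSumsNonneg v fun i => f (k + i))
        simp only [bipartiteAbove, bipartiteBelow] at h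
        exact h
    _ = ∑ _k : Fin M, #{f ∈ S | PrefixSumsNonneg v f} := by
        refine sum_congr rfl fun k _ => card_nbij' (fun f i => f (k + i)) (fun f i => f (-k + i))
          ?_ ?_ ?_ ?_ <;> intro f hf
        · simp only [coe_filter, Set.mem_ofPred_eq] at hf ⊢
          exact ⟨hS _ hf.1 _, hf.2⟩
        · simp only [coe_filter, Set.mem_ofPred_eq] at hf ⊢
          refine ⟨hS _ hf.1 _, ?_⟩
          simpa [← add_assoc] using hf.2
        · simp [← add_assoc]
        · simp [← add_assoc]
    _ = M * #{f ∈ S | PrefixSumsNonneg v f} := by simp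

end Words

instance : Fintype SStep :=
  ⟨⟨{.down, .right, .diag}, by decide⟩, fun s => by cases s <;> decide⟩

def SStep.weight (r : ℕ) : SStep → ℤ
  | .down => r
  | .right => -1
  | .diag => 0

def wordsWithCounts (M d e : ℕ) : Finset (Fin M → SStep) :=
  {f | (List.ofFn f).count .down = d ∧ (List.ofFn f).count .diag = e}

lemma card_wordsWithCounts (M d e : ℕ) :
    #(wordsWithCounts M d e) = M.choose d * (M - d).choose e := by
  let toSets (f : Fin M → SStep) : Σ _ : Finset (Fin M), Finset (Fin M) :=
    ⟨univ.filter (f · = .down), univ.filter (f · = .diag)⟩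
  let ofSets (p : Σ _ : Finset (Fin M), Finset (Fin M)) (i : Fin M) : SStep :=
    if i ∈ p.1 then .down else if i ∈ p.2 then .diag else .right
  have toSets_ofSets (p : Σ _ : Finset (Fin M), Finset (Fin M)) (hp : p.2 ⊆ p.1ᶜ) :
      toSets (ofSets p) = p := by
    have hdisj : ∀ i ∈ p.2, i ∉ p.1 := fun i hi => mem_compl.1 (hp hi)
    refine Sigma.ext ?_ (heq_of_eq ?_) <;> ext i <;> by_cases h1 : i ∈ p.1 <;>
      by_cases h2 : i ∈ p.2 <;> simp_all [toSets, ofSets]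
  have hcard : #(wordsWithCounts M d e) =
      #((univ.powersetCard d).sigma fun A : Finset (Fin M) => Aᶜ.powersetCard e) := by
    simp only [wordsWithCounts, List.count_ofFn]
    refine card_nbij' toSets ofSets (fun f hf => ?_) (fun p hp => ?_) (fun f _ => ?_)
      (fun p hp => toSets_ofSets p ?_) <;>
      simp only [coe_filter, coe_sigma, Set.mem_ofPred_eq, Set.mem_sigma_iff, mem_coe,
        mem_powersetCard, subset_univ, mem_univ, true_and] at *
    · exact ⟨hf.1, fun i => by simp_all [toSets], hf.2⟩
    · have h := toSets_ofSets p hp.2.1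
      exact ⟨(congrArg (fun q => #q.1) h).trans hp.1, (congrArg (fun q => #q.2) h).trans hp.2.2⟩
    · funext i
      cases h : f i <;> simp [toSets, ofSets, h]
    · exact hp.2.1
  rw [hcard, card_sigma, sum_congr rfl fun A hA => by
    rw [card_powersetCard, card_compl, Fintype.card_fin, (mem_powersetCard.1 hA).2]]
  simp

lemma shift_mem_wordsWithCounts {M d e : ℕ} [NeZero M] {f : Fin M → SStep}
    (hf : f ∈ wordsWithCounts M d e) (k : Fin M) :
    (fun i => f (k + i)) ∈ wordsWithCounts M d e := by
  have hperm : (List.ofFn fun i => f (k + i)).Perm (List.ofFn f) :=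
    (Equiv.addLeft k).ofFn_comp_perm f
  simpa [wordsWithCounts, hperm.count_eq] using hf

lemma sPos_eq_count (r n : ℕ) (l : List SStep) :
    sPos r n l = ((l.count .right : ℤ) + r * l.count .diag,
      (n : ℤ) - l.count .down - l.count .diag) := by
  induction l using List.reverseRecOn with
  | nil => simp [sPos]
  | append_singleton l s ih =>
    rw [sPos, List.foldl_append, ← sPos, ih]
    cases s <;> ext <;> simp [sDisp, List.count_append] <;> ring

namespace SStep

lemma sum_map_weight (r : ℕ) (l : List SStep) :
    (l.map (weight r)).sum = r * l.count .down - l.count .right := by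
  induction l with
  | nil => simp
  | cons s l ih => cases s <;> simp [weight, ih] <;> ring

lemma length_eq_count_add (l : List SStep) :
    l.length = l.count .down + l.count .right + l.count .diag := by
  induction l with
  | nil => simp
  | cons s l ih => cases s <;> simp [ih] <;> omega

end SStep

section Schroeder

variable {r n d : ℕ}

lemma mem_Sch_iff (hd : d ≤ n) {l : List SStep} :
    l ∈ Sch r n d ↔ (l.count .down = d ∧ l.count .diag = n - d ∧ l.count .right = r * d) ∧
      ∀ j, 0 ≤ ((l.take j).map (SStep.weight r)).sum := by
  have below_iff (β : List SStep) :
      (sPos r n β).1 + r * (sPos r n β).2 ≤ r * n ↔ 0 ≤ (β.map (SStep.weight r)).sum := by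
    rw [sPos_eq_count, SStep.sum_map_weight]
    constructor <;> intro h <;> linarith
  have prefixes_iff {P : List SStep → Prop} :
      (∀ β, β <+: l → P β) ↔ ∀ j, P (l.take j) :=
    ⟨fun h j => h _ (l.take_prefix j),
      fun h β hβ => List.prefix_iff_eq_take.1 hβ ▸ h β.length⟩
  simp only [Sch, IsSchroder, Set.mem_ofPred_eq, below_iff, prefixes_iff]
  rw [sPos_eq_count, Prod.mk.injEq]
  constructor
  · rintro ⟨⟨⟨hx, hy⟩, hpre⟩, hdiag⟩
    rw [hdiag, Nat.cast_sub hd] at hx hy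
    have hright : (l.count .right : ℤ) = r * d := by linear_combination hx
    exact ⟨⟨by omega, hdiag, by exact_mod_cast hright⟩, hpre⟩
  · rintro ⟨⟨hdown, hdiag, hright⟩, hpre⟩
    refine ⟨⟨⟨?_, ?_⟩, hpre⟩, hdiag⟩ <;> rw [hdiag, Nat.cast_sub hd] <;>
      push_cast [hdown, hright] <;> ring

lemma exists_mem_Sch_append_right_iff (hd : d ≤ n) {L : List SStep}
    (hL : L.length = n + r * d + 1) :
    (∃ l ∈ Sch r n d, L = l ++ [.right]) ↔ (L.count .down = d ∧ L.count .diag = n - d) ∧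
      ∀ t < L.length, 0 ≤ ((L.take t).map (SStep.weight r)).sum := by
  simp_rw [mem_Sch_iff hd]
  constructor
  · rintro ⟨l, ⟨⟨hdown, hdiag, -⟩, hpre⟩, rfl⟩
    refine ⟨by simp [List.count_append, hdown, hdiag], fun t ht => ?_⟩
    rw [List.take_append_of_le_length (by simpa using ht)]
    exact hpre t
  · rintro ⟨⟨hdown, hdiag⟩, hpre⟩
    obtain ⟨l, s, rfl⟩ : ∃ l s, L = l ++ [s] := by
      simpa using (List.eq_nil_or_concat L).resolve_left (by rintro rfl; simp at hL)
    have hlen : l.length = n + r * d := by simpa using hL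
    have hprefix (j : ℕ) : 0 ≤ ((l.take j).map (SStep.weight r)).sum := by
      rcases le_or_gt j l.length with hj | hj
      · simpa [List.take_append_of_le_length hj] using hpre j (by simp; omega)
      · simpa [List.take_of_length_le hj.le] using hpre l.length (by simp)
    have hsum := hprefix l.length
    rw [List.take_length, SStep.sum_map_weight] at hsum
    have hcount := SStep.length_eq_count_add l
    -- the counts leave `l` with negative weight unless the last step is a right step
    cases s <;> simp only [List.count_append, List.count_singleton, beq_iff_eq, reduceCtorEq,
      if_true, if_false, add_zero] at hdown hdiag
    · have : (r : ℤ) * l.count .down = r * d - r := by rw [← hdown]; push_cast; ring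
      omega
    · exact ⟨l, ⟨⟨hdown, hdiag, by omega⟩, hprefix⟩, rfl⟩
    · have : (r : ℤ) * l.count .down = r * d := by rw [hdown]
      omega

lemma sum_weight_eq_neg_one (hd : d ≤ n) {f : Fin (n + r * d + 1) → SStep}
    (hf : f ∈ wordsWithCounts (n + r * d + 1) d (n - d)) :
    ∑ i ∈ range (n + r * d + 1), SStep.weight r (f i) = -1 := by
  simp only [wordsWithCounts, mem_filter, mem_univ, true_and] at hf
  have hlen := SStep.length_eq_count_add (List.ofFn f)
  rw [← List.sum_take_map_ofFn _ _ le_rfl, List.take_of_length_le (by simp),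
    SStep.sum_map_weight, hf.1]
  rw [List.length_ofFn, hf.1, hf.2] at hlen
  zify [hd] at hlen
  omega

lemma mem_filter_prefixSumsNonneg_iff (hd : d ≤ n) {f : Fin (n + r * d + 1) → SStep} :
    f ∈ {f ∈ wordsWithCounts (n + r * d + 1) d (n - d) |
        PrefixSumsNonneg (SStep.weight r) f} ↔
      ∃ l ∈ Sch r n d, List.ofFn f = l ++ [.right] := by
  rw [exists_mem_Sch_append_right_iff hd List.length_ofFn, mem_filter, List.length_ofFn]
  simp only [wordsWithCounts, mem_filter, mem_univ, true_and]
  refine and_congr_right' (forall₂_congr fun t ht => ?_)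
  rw [List.sum_take_map_ofFn _ _ ht.le]

lemma ncard_Sch_eq_card (hd : d ≤ n) :
    (Sch r n d).ncard =
      #{f ∈ wordsWithCounts (n + r * d + 1) d (n - d) | PrefixSumsNonneg (SStep.weight r) f} := by
  rw [← Set.ncard_coe_finset, ← Set.ncard_image_of_injective _ List.ofFn_injective,
    ← Set.ncard_image_of_injective _ (List.append_left_injective [SStep.right])]
  congr 1
  ext L
  simp only [Set.mem_image, mem_coe, mem_filter_prefixSumsNonneg_iff hd]
  constructor
  · rintro ⟨l, hl, rfl⟩
    have hlen : (l ++ [SStep.right]).length = n + r * d + 1 := by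
      obtain ⟨⟨hdown, hdiag, hright⟩, -⟩ := (mem_Sch_iff hd).1 hl
      simp [SStep.length_eq_count_add l, hdown, hdiag, hright]
      omega
    obtain ⟨f, hf⟩ : ∃ f : Fin (n + r * d + 1) → SStep, List.ofFn f = l ++ [.right] := by
      rw [← hlen]
      exact ⟨_, List.ofFn_get _⟩
    exact ⟨f, ⟨l, hl, hf⟩, hf⟩
  · rintro ⟨f, ⟨l, hl, hf⟩, rfl⟩
    exact ⟨l, hl, hf.symm⟩

end Schroeder

theorem schroeder_count_general (r n d : ℕ) (hd : d ≤ n) :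
    (d * r + 1) * (Sch r n d).ncard = Nat.choose n d * Nat.choose (d * r + n) n := by
  have hcycle := card_eq_mul_card_filter_prefixSumsNonneg (v := SStep.weight r)
    (wordsWithCounts (n + r * d + 1) d (n - d)) (fun f hf => shift_mem_wordsWithCounts hf)
    (fun f hf => sum_weight_eq_neg_one hd hf)
  rw [card_wordsWithCounts, ← ncard_Sch_eq_card hd, show n + r * d = d * r + n by ring] at hcycle
  apply Nat.eq_of_mul_eq_mul_left (show 0 < d * r + n + 1 by omega)
  rw [← succ_mul_choose_mul_choose _ _ _ hd, hcycle]
  ring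

/-- For `n ≥ 1`, `r ≥ 1`, `0 ≤ d ≤ n`, we have
`(d*r+1) * |Sch_{n,d}^r| = C(n,d) * C(d*r+n, n)`. -/
theorem schroeder_count (r n d : ℕ) (hr : 1 ≤ r) (hn : 1 ≤ n) (hd : d ≤ n) :
    (d * r + 1) * (Sch r n d).ncard = Nat.choose n d * Nat.choose (d * r + n) n :=
  schroeder_count_general r n d hd
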